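/- arXiv:2504.06378 — 6 statements merged into one kernel-verified Lean document; each statement's English description precedes it below -/
import Mathlib

section
/- Let P be an n×n row-stochastic real matrix partitioned into blocks P_{ij} ∈ ℝ^{n_i×n_j}, and for each i ∈ {1,…,m} let π̂_i ∈ ℝ^{n_i} be a row vector all of whose entries are strictly positive, with ‖π̂_i‖₁ = 1. Define the m×m real matrix R by R_{ij} = π̂_i P_{ij} 𝟙. If P is irreducible, then R is irreducible. -/
open Matrix BigOperators

lemma pow_entry_nonneg {ι : Type*} [Fintype ι] [DecidableEq ι]
    (Q : Matrix ι ι ℝ) (h : ∀ p q, 0 ≤ Q p q) :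
    ∀ (k : ℕ) (p q : ι), 0 ≤ (Q ^ k) p q := by
  intro k
  induction k with
  | zero =>
    intro p q
    simp [Matrix.one_apply]
    split <;> norm_num
  | succ k ih =>
    intro p q
    rw [pow_succ, Matrix.mul_apply]
    exact Finset.sum_nonneg fun r _ => mul_nonneg (ih p r) (h r q)

/-- If `P` is an `n×n` row-stochastic irreducible matrix partitioned into blocks
and each `π̂_i` is a strictly positive row vector with `‖π̂_i‖₁ = 1`, then the aggregation
matrix `R` with `R_{ij} = π̂_i P_{ij} 𝟙` is irreducible.  Here a square nonnegative matrix `Q`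
is irreducible iff for every pair of indices `(p,q)` there is `k ≥ 1` with `(Q^k)_{pq} > 0`. -/
theorem stmt_1 {m : ℕ} (hm : 1 ≤ m) (n : Fin m → ℕ) (hn : ∀ i, 1 ≤ n i)
    (P : Matrix ((i : Fin m) × Fin (n i)) ((i : Fin m) × Fin (n i)) ℝ)
    (hP0 : ∀ p q, 0 ≤ P p q)
    (hP1 : ∀ p, ∑ q, P p q = 1)
    (hPirr : ∀ p q, ∃ k : ℕ, 1 ≤ k ∧ 0 < (P ^ k) p q)
    (pihat : (i : Fin m) → Fin (n i) → ℝ)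
    (hpihat0 : ∀ i k, 0 < pihat i k)
    (hpihat1 : ∀ i, ∑ k, |pihat i k| = 1)
    (R : Matrix (Fin m) (Fin m) ℝ)
    (hR : ∀ i j, R i j = ∑ k, ∑ l, pihat i k * P ⟨i, k⟩ ⟨j, l⟩) :
    ∀ i j : Fin m, ∃ k : ℕ, 1 ≤ k ∧ 0 < (R ^ k) i j := by
  -- R has nonnegative entries
  have hR0 : ∀ i j, 0 ≤ R i j := by
    intro i j
    rw [hR]
    exact Finset.sum_nonneg fun k _ => Finset.sum_nonneg fun l _ =>
      mul_nonneg (hpihat0 i k).le (hP0 _ _)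
  -- If P p q > 0 then R p.1 q.1 > 0
  have hRpos : ∀ p q, 0 < P p q → 0 < R p.1 q.1 := by
    intro p q hpq
    rw [hR]
    apply Finset.sum_pos'
    · intro k _
      exact Finset.sum_nonneg fun l _ => mul_nonneg (hpihat0 _ _).le (hP0 _ _)
    · refine ⟨p.2, Finset.mem_univ _, ?_⟩
      apply Finset.sum_pos'
      · intro l _
        exact mul_nonneg (hpihat0 _ _).le (hP0 _ _)
      · refine ⟨q.2, Finset.mem_univ _, ?_⟩
        have : (⟨p.1, p.2⟩ : (i : Fin m) × Fin (n i)) = p := Sigma.eta p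
        rw [this]
        have : (⟨q.1, q.2⟩ : (i : Fin m) × Fin (n i)) = q := Sigma.eta q
        rw [this]
        exact mul_pos (hpihat0 _ _) hpq
  -- key induction: (P^k) p q > 0 → (R^k) p.1 q.1 > 0
  have key : ∀ (k : ℕ) (p q : (i : Fin m) × Fin (n i)),
      0 < (P ^ k) p q → 0 < (R ^ k) p.1 q.1 := by
    intro k
    induction k with
    | zero =>
      intro p q h
      simp only [pow_zero, Matrix.one_apply] at h ⊢
      split
      · norm_num
      · rename_i hne
        split at h
        · rename_i heq; exact absurd (congrArg Sigma.fst heq) hne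
        · norm_num at h
    | succ k ih =>
      intro p q h
      rw [pow_succ', Matrix.mul_apply] at h
      have : ∃ r, 0 < P p r * (P ^ k) r q := by
        by_contra hc
        push_neg at hc
        have : ∑ r, P p r * (P ^ k) r q ≤ 0 := Finset.sum_nonpos fun r _ => hc r
        linarith
      obtain ⟨r, hr⟩ := this
      have h1 : 0 < P p r := by
        rcases lt_or_ge 0 (P p r) with h' | h'
        · exact h'
        · exfalso
          have := mul_nonpos_of_nonpos_of_nonneg h' (pow_entry_nonneg P hP0 k r q)
          linarith
      have h2 : 0 < (P ^ k) r q := by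
        rcases lt_or_ge 0 ((P ^ k) r q) with h' | h'
        · exact h'
        · exfalso
          have := mul_nonpos_of_nonneg_of_nonpos (hP0 p r) h'
          linarith
      rw [pow_succ', Matrix.mul_apply]
      apply Finset.sum_pos'
      · intro s _
        exact mul_nonneg (hR0 _ _) (pow_entry_nonneg R hR0 k _ _)
      · exact ⟨r.1, Finset.mem_univ _, mul_pos (hRpos p r h1) (ih r q h2)⟩
  intro i j
  obtain ⟨k, hk1, hkpos⟩ := hPirr ⟨i, ⟨0, hn i⟩⟩ ⟨j, ⟨0, hn j⟩⟩
  exact ⟨k, hk1, key k _ _ hkpos⟩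
end

section
/- Let x, y ∈ ℝ^d and let τ > 0 and φ ≥ 0 satisfy ‖y‖₁ ≥ τ, ‖x − y‖₁ ≤ φ, and φ < τ. Then x ≠ 0 and ‖ x/‖x‖₁ − y/‖y‖₁ ‖₁ ≤ 2φ/(τ − φ). -/
/-! In ℓ¹ this is a normed-space estimate. Writing `x̂ = x / ‖x‖`, the identity
`‖x‖ • (x̂ - ŷ) = (x - y) + (‖y‖ - ‖x‖) • ŷ` together with `‖ŷ‖ ≤ 1` gives
`‖x̂ - ŷ‖ ≤ 2 ‖x - y‖ / ‖x‖`, and `‖x‖ ≥ ‖y‖ - ‖x - y‖ ≥ τ - φ > 0`. -/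

namespace NormedSpace

variable {V : Type*} [NormedAddCommGroup V] [NormedSpace ℝ V]

theorem norm_normalize_le (x : V) : ‖normalize x‖ ≤ 1 := by
  rcases eq_or_ne x 0 with rfl | hx
  · simp
  · exact (norm_normalize hx).le

theorem norm_normalize_sub_normalize_le {x : V} (hx : x ≠ 0) (y : V) :
    ‖normalize x - normalize y‖ ≤ 2 * ‖x - y‖ / ‖x‖ := by
  have hx' : 0 < ‖x‖ := norm_pos_iff.mpr hx
  have key : ‖x‖ • (normalize x - normalize y) = (x - y) + (‖y‖ - ‖x‖) • normalize y := by
    rw [smul_sub, sub_smul, norm_smul_normalize, norm_smul_normalize]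
    abel
  rw [le_div_iff₀ hx', mul_comm, ← Real.norm_of_nonneg hx'.le, ← norm_smul, key]
  calc ‖(x - y) + (‖y‖ - ‖x‖) • normalize y‖
      ≤ ‖x - y‖ + |‖y‖ - ‖x‖| * ‖normalize y‖ := by
        rw [← Real.norm_eq_abs, ← norm_smul]
        exact norm_add_le _ _
    _ ≤ ‖x - y‖ + ‖x - y‖ * 1 := by
        gcongr
        · rw [norm_sub_rev x y]; exact abs_norm_sub_norm_le y x
        · exact norm_normalize_le y
    _ = 2 * ‖x - y‖ := by ring

end NormedSpace

theorem stmt_4_general {d : ℕ} (x y : Fin d → ℝ) (τ φ : ℝ)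
    (hφ : 0 ≤ φ)
    (hy : τ ≤ ∑ i, |y i|)
    (hxy : ∑ i, |x i - y i| ≤ φ)
    (hφτ : φ < τ) :
    x ≠ 0 ∧
      ∑ i, |x i / (∑ j, |x j|) - y i / (∑ j, |y j|)| ≤ 2 * φ / (τ - φ) := by
  set X := WithLp.toLp 1 x
  set Y := WithLp.toLp 1 y
  have hY : τ ≤ ‖Y‖ := by simpa [Y, PiLp.norm_eq_of_L1] using hy
  have hXY : ‖X - Y‖ ≤ φ := by simpa [X, Y, PiLp.norm_eq_of_L1] using hxy
  have hX : τ - φ ≤ ‖X‖ := by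
    linarith [norm_sub_norm_le Y X, norm_sub_rev Y X]
  have hX0 : X ≠ 0 := norm_pos_iff.mp (by linarith)
  refine ⟨fun hx => hX0 (by simp [X, hx]), ?_⟩
  calc _ = ‖NormedSpace.normalize X - NormedSpace.normalize Y‖ := by
        simp [X, Y, NormedSpace.normalize, PiLp.norm_eq_of_L1, div_eq_inv_mul]
    _ ≤ 2 * ‖X - Y‖ / ‖X‖ := NormedSpace.norm_normalize_sub_normalize_le hX0 Y
    _ ≤ 2 * φ / (τ - φ) := by gcongr

/-- If `‖y‖₁ ≥ τ > 0`, `‖x - y‖₁ ≤ φ` and `φ < τ`, then `x ≠ 0` and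
`‖x/‖x‖₁ - y/‖y‖₁‖₁ ≤ 2φ/(τ - φ)`. -/
theorem stmt_4 {d : ℕ} (x y : Fin d → ℝ) (τ φ : ℝ)
    (hτ : 0 < τ) (hφ : 0 ≤ φ)
    (hy : τ ≤ ∑ i, |y i|)
    (hxy : ∑ i, |x i - y i| ≤ φ)
    (hφτ : φ < τ) :
    x ≠ 0 ∧
      ∑ i, |x i / (∑ j, |x j|) - y i / (∑ j, |y j|)| ≤ 2 * φ / (τ - φ) :=
  stmt_4_general x y τ φ hφ hy hxy hφτ
end

section
/- Let m ≥ 2, let R and R' be m×m real matrices, and let s, s' ∈ ℝ^m be row vectors with sR = s, s'R' = s', and ∑_i s_i = ∑_i s'_i = 1. Suppose S is an invertible m×m real matrix whose first column is the all-ones vector and such that S^{-1} R S = fromBlocks(1, 0; 0, B) for some (m−1)×(m−1) real matrix B with I − B invertible. Then ‖s' − s‖ ≤ ‖s'‖ · ‖R' − R‖ · ‖S‖ · ‖(I−B)^{-1}‖ · ‖S^{-1}‖. -/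
open Matrix BigOperators

/-- The spectral (ℓ²→ℓ²) operator norm of a real matrix. -/
noncomputable def specNorm {p q : Type*} [Fintype p] [Fintype q] [DecidableEq q]
    (A : Matrix p q ℝ) : ℝ :=
  ‖LinearMap.toContinuousLinearMap (Matrix.toEuclideanLin A)‖

/-- The Euclidean norm of a real vector. -/
noncomputable def euclNorm {p : Type*} [Fintype p] (v : p → ℝ) : ℝ :=
  Real.sqrt (∑ i, v i ^ 2)

open scoped Matrix.Norms.L2Operator

lemma specNorm_eq_l2 {p q : Type*} [Fintype p] [Fintype q] [DecidableEq q]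
    (A : Matrix p q ℝ) : specNorm A = ‖A‖ := rfl

lemma euclNorm_eq_norm {p : Type*} [Fintype p] (v : p → ℝ) :
    euclNorm v = ‖(EuclideanSpace.equiv p ℝ).symm v‖ := by
  rw [euclNorm, EuclideanSpace.norm_eq]
  congr 1
  refine Finset.sum_congr rfl fun i _ => ?_
  simp [Real.norm_eq_abs, sq_abs]

lemma euclNorm_nonneg {p : Type*} [Fintype p] (v : p → ℝ) : 0 ≤ euclNorm v :=
  Real.sqrt_nonneg _

lemma euclNorm_vecMul_le {p q : Type*} [Fintype p] [Fintype q] [DecidableEq p] [DecidableEq q]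
    (v : p → ℝ) (A : Matrix p q ℝ) :
    euclNorm (v ᵥ* A) ≤ euclNorm v * specNorm A := by
  rw [euclNorm_eq_norm, euclNorm_eq_norm, specNorm_eq_l2, mul_comm]
  have h1 : v ᵥ* A = Aᵀ *ᵥ v := (Matrix.mulVec_transpose A v).symm
  have h2 : Aᵀ = Aᴴ := (Matrix.conjTranspose_eq_transpose_of_trivial A).symm
  rw [h1, h2, ← Matrix.l2_opNorm_conjTranspose A]
  exact Matrix.l2_opNorm_mulVec Aᴴ ((EuclideanSpace.equiv p ℝ).symm v)

lemma euclNorm_comp_inr_le {p q : Type*} [Fintype p] [Fintype q] (v : p ⊕ q → ℝ) :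
    euclNorm (v ∘ Sum.inr) ≤ euclNorm v := by
  apply Real.sqrt_le_sqrt
  rw [Fintype.sum_sum_type]
  exact le_add_of_nonneg_left (Finset.sum_nonneg fun _ _ => sq_nonneg _)

lemma euclNorm_eq_comp_inr {p q : Type*} [Fintype p] [Fintype q] (v : p ⊕ q → ℝ)
    (h : ∀ i, v (Sum.inl i) = 0) : euclNorm v = euclNorm (v ∘ Sum.inr) := by
  unfold euclNorm
  rw [Fintype.sum_sum_type]
  simp [h]

/-- Let `m ≥ 2`, `sR = s`, `s'R' = s'`, `∑ s = ∑ s' = 1`, and let `S` be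
invertible with first column the all-ones vector and `S⁻¹ R S = fromBlocks(1,0;0,B)` with
`I - B` invertible.  Then `‖s' - s‖ ≤ ‖s'‖·‖R' - R‖·‖S‖·‖(I-B)⁻¹‖·‖S⁻¹‖`. -/
theorem stmt_7 {m : ℕ} (hm : 2 ≤ m)
    (R R' : Matrix (Fin 1 ⊕ Fin (m - 1)) (Fin 1 ⊕ Fin (m - 1)) ℝ)
    (s s' : Fin 1 ⊕ Fin (m - 1) → ℝ)
    (hs : s ᵥ* R = s) (hs' : s' ᵥ* R' = s')
    (hs1 : ∑ i, s i = 1) (hs'1 : ∑ i, s' i = 1)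
    (S : Matrix (Fin 1 ⊕ Fin (m - 1)) (Fin 1 ⊕ Fin (m - 1)) ℝ)
    (hS : IsUnit S)
    (hScol : ∀ p, S p (Sum.inl 0) = 1)
    (B : Matrix (Fin (m - 1)) (Fin (m - 1)) ℝ)
    (hSRS : S⁻¹ * R * S = Matrix.fromBlocks (Matrix.of fun _ _ => (1 : ℝ)) 0 0 B)
    (hB : IsUnit (1 - B)) :
    euclNorm (s' - s) ≤
      euclNorm s' * specNorm (R' - R) * specNorm S * specNorm (1 - B)⁻¹ * specNorm S⁻¹ := by
  have hSd : IsUnit S.det := (Matrix.isUnit_iff_isUnit_det S).mp hS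
  have hBd : IsUnit (1 - B).det := (Matrix.isUnit_iff_isUnit_det _).mp hB
  have hSS : S * S⁻¹ = 1 := Matrix.mul_nonsing_inv S hSd
  have hSS' : S⁻¹ * S = 1 := Matrix.nonsing_inv_mul S hSd
  have hBB : (1 - B) * (1 - B)⁻¹ = 1 := Matrix.mul_nonsing_inv _ hBd
  set D : Matrix (Fin 1 ⊕ Fin (m - 1)) (Fin 1 ⊕ Fin (m - 1)) ℝ :=
    Matrix.fromBlocks 0 0 0 (1 - B) with hDdef
  -- 1 - R = S * D * S⁻¹
  have hone : (1 : Matrix (Fin 1) (Fin 1) ℝ) = Matrix.of fun _ _ => (1 : ℝ) := by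
    ext i j
    have : i = j := Subsingleton.elim i j
    simp [this, Matrix.one_apply]
  have hD : (1 : Matrix (Fin 1 ⊕ Fin (m - 1)) (Fin 1 ⊕ Fin (m - 1)) ℝ) -
      Matrix.fromBlocks (Matrix.of fun _ _ => (1 : ℝ)) 0 0 B = D := by
    rw [hDdef, ← Matrix.fromBlocks_one]
    ext i j
    cases i <;> cases j <;>
      simp [Matrix.fromBlocks, ← hone]
  have hR1 : 1 - R = S * D * S⁻¹ := by
    have h1 : S⁻¹ * (1 - R) * S = D := by
      rw [Matrix.mul_sub, Matrix.mul_one, Matrix.sub_mul, hSS', hSRS, hD]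
    calc 1 - R = (S * S⁻¹) * (1 - R) * (S * S⁻¹) := by rw [hSS, one_mul, mul_one]
      _ = S * (S⁻¹ * (1 - R) * S) * S⁻¹ := by noncomm_ring
      _ = S * D * S⁻¹ := by rw [h1]
  set w : Fin 1 ⊕ Fin (m - 1) → ℝ := (s' - s) ᵥ* S with hwdef
  have hw0 : ∀ i, w (Sum.inl i) = 0 := by
    intro i
    have hi : i = 0 := Subsingleton.elim i 0
    subst hi
    have : w (Sum.inl 0) = ∑ p, (s' - s) p * S p (Sum.inl 0) := by
      simp [hwdef, Matrix.vecMul, dotProduct]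
    rw [this]
    simp only [hScol, mul_one, Pi.sub_apply]
    rw [Finset.sum_sub_distrib, hs1, hs'1, sub_self]
  -- key identity
  have key1 : (s' - s) ᵥ* (1 - R) = s' ᵥ* (R' - R) := by
    rw [Matrix.sub_vecMul, Matrix.vecMul_sub, Matrix.vecMul_sub, Matrix.vecMul_one,
      Matrix.vecMul_one, Matrix.vecMul_sub, hs, hs']
    ring_nf
  set u : Fin 1 ⊕ Fin (m - 1) → ℝ := (s' ᵥ* (R' - R)) ᵥ* S with hudef
  have key2 : u = w ᵥ* D := by
    rw [hudef, ← key1, hR1, hwdef]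
    rw [← Matrix.vecMul_vecMul, ← Matrix.vecMul_vecMul]
    rw [Matrix.vecMul_vecMul _ S⁻¹ S, hSS', Matrix.vecMul_one]
  have key3 : w ∘ Sum.inr = (u ∘ Sum.inr) ᵥ* (1 - B)⁻¹ := by
    have hu_inr : u ∘ Sum.inr = (w ∘ Sum.inr) ᵥ* (1 - B) := by
      funext j
      have : u (Sum.inr j) = (w ᵥ* D) (Sum.inr j) := by rw [key2]
      rw [Function.comp_apply, this, hDdef]
      simp [Matrix.vecMul, dotProduct, Fintype.sum_sum_type, Matrix.fromBlocks]
    rw [hu_inr, Matrix.vecMul_vecMul, hBB, Matrix.vecMul_one]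
  have key4 : s' - s = w ᵥ* S⁻¹ := by
    rw [hwdef, Matrix.vecMul_vecMul, hSS, Matrix.vecMul_one]
  -- norm estimates
  have e1 : euclNorm (s' - s) ≤ euclNorm w * specNorm S⁻¹ := by
    rw [key4]; exact euclNorm_vecMul_le w S⁻¹
  have e2 : euclNorm w ≤ euclNorm u * specNorm (1 - B)⁻¹ := by
    rw [euclNorm_eq_comp_inr w hw0, key3]
    calc euclNorm ((u ∘ Sum.inr) ᵥ* (1 - B)⁻¹)
        ≤ euclNorm (u ∘ Sum.inr) * specNorm (1 - B)⁻¹ := euclNorm_vecMul_le _ _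
      _ ≤ euclNorm u * specNorm (1 - B)⁻¹ := by
          apply mul_le_mul_of_nonneg_right (euclNorm_comp_inr_le u)
          rw [specNorm_eq_l2]; exact norm_nonneg _
  have e3 : euclNorm u ≤ euclNorm s' * specNorm (R' - R) * specNorm S := by
    calc euclNorm u ≤ euclNorm (s' ᵥ* (R' - R)) * specNorm S := euclNorm_vecMul_le _ _
      _ ≤ euclNorm s' * specNorm (R' - R) * specNorm S := by
          apply mul_le_mul_of_nonneg_right (euclNorm_vecMul_le _ _)
          rw [specNorm_eq_l2]; exact norm_nonneg _
  have hnn : (0 : ℝ) ≤ specNorm S⁻¹ := by rw [specNorm_eq_l2]; exact norm_nonneg _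
  have hnn2 : (0 : ℝ) ≤ specNorm (1 - B)⁻¹ := by rw [specNorm_eq_l2]; exact norm_nonneg _
  calc euclNorm (s' - s) ≤ euclNorm w * specNorm S⁻¹ := e1
    _ ≤ (euclNorm u * specNorm (1 - B)⁻¹) * specNorm S⁻¹ :=
        mul_le_mul_of_nonneg_right e2 hnn
    _ ≤ (euclNorm s' * specNorm (R' - R) * specNorm S * specNorm (1 - B)⁻¹) * specNorm S⁻¹ := by
        apply mul_le_mul_of_nonneg_right _ hnn
        exact mul_le_mul_of_nonneg_right e3 hnn2
end

section
/- Let P be an n×n row-stochastic real matrix partitioned into blocks P_{ij} ∈ ℝ^{n_i×n_j}, and let π ∈ ℝ^n be a nonnegative row vector, partitioned into blocks π_i ∈ ℝ^{n_i}, satisfying πP = π and π𝟙 = 1, with π_i ≠ 0 for every i; write s_j = ‖π_j‖₁ and π̂_j = π_j/s_j. Let φ ∈ [0,1] and ε ≥ 0, and for each j < m let s'_j ∈ ℝ and π̂'_j ∈ ℝ^{n_j} satisfy |s'_j − s_j| ≤ φ and ‖π̂'_j − π̂_j‖₁ ≤ φ, and suppose each row of P_{jm} sums to at most ε for every j < m.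 If π'_m ∈ ℝ^{n_m} satisfies π'_m = π'_m P_{mm} + ∑_{j<m} s'_j π̂'_j P_{jm}, then ‖(π'_m − π_m)(I − P_{mm})‖₁ ≤ 3(m−1)·φ·ε. -/
open Matrix BigOperators

/-- With `P` row-stochastic, `π ≥ 0` stationary (`πP = π`, `π𝟙 = 1`, blocks
nonzero), `s_j = ‖π_j‖₁`, `π̂_j = π_j/s_j`, `φ ∈ [0,1]`, `ε ≥ 0`, approximations
`|s'_j - s_j| ≤ φ`, `‖π̂'_j - π̂_j‖₁ ≤ φ` for `j < m`, rows of `P_{jm}` summing to at most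
`ε` for `j < m`, and `π'_m = π'_m P_{mm} + ∑_{j<m} s'_j π̂'_j P_{jm}`, one has
`‖(π'_m - π_m)(I - P_{mm})‖₁ ≤ 3(m-1)φε`. -/
theorem stmt_15 {m : ℕ} (hm : 0 < m) (n : Fin m → ℕ)
    (P : Matrix ((i : Fin m) × Fin (n i)) ((i : Fin m) × Fin (n i)) ℝ)
    (hP0 : ∀ p q, 0 ≤ P p q)
    (hP1 : ∀ p, ∑ q, P p q = 1)
    (piv : ((i : Fin m) × Fin (n i)) → ℝ)
    (hpiv0 : ∀ p, 0 ≤ piv p)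
    (hpivP : piv ᵥ* P = piv)
    (hpiv1 : ∑ p, piv p = 1)
    (hpivne : ∀ i : Fin m, (fun k => piv ⟨i, k⟩) ≠ 0)
    (s : Fin m → ℝ) (hs : ∀ j, s j = ∑ k, |piv ⟨j, k⟩|)
    (pihat : (j : Fin m) → Fin (n j) → ℝ)
    (hpihat : ∀ j k, pihat j k = piv ⟨j, k⟩ / s j)
    (φ ε : ℝ) (hφ0 : 0 ≤ φ) (hφ1 : φ ≤ 1) (hε : 0 ≤ ε)
    (last : Fin m) (hlast : (last : ℕ) = m - 1)
    (s' : Fin m → ℝ) (pihat' : (j : Fin m) → Fin (n j) → ℝ)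
    (hs' : ∀ j, j ≠ last → |s' j - s j| ≤ φ)
    (hpihat' : ∀ j, j ≠ last → ∑ k, |pihat' j k - pihat j k| ≤ φ)
    (hrow : ∀ j, j ≠ last → ∀ k, ∑ l, P ⟨j, k⟩ ⟨last, l⟩ ≤ ε)
    (piv' : Fin (n last) → ℝ)
    (hpiv' : ∀ l, piv' l = (∑ k, piv' k * P ⟨last, k⟩ ⟨last, l⟩)
        + ∑ j : Fin m, if j ≠ last then s' j * ∑ k, pihat' j k * P ⟨j, k⟩ ⟨last, l⟩ else 0) :
    ∑ l, |∑ k, (piv' k - piv ⟨last, k⟩) *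
        ((if k = l then 1 else 0) - P ⟨last, k⟩ ⟨last, l⟩)| ≤
      3 * ((m : ℝ) - 1) * φ * ε := by
  classical
  have hsig : ∀ (f : ((i : Fin m) × Fin (n i)) → ℝ), ∑ p, f p = ∑ j, ∑ k, f ⟨j, k⟩ := by
    intro f
    rw [← Finset.univ_sigma_univ, Finset.sum_sigma]
  have hs_pos : ∀ j, 0 < s j := by
    intro j
    obtain ⟨k, hk⟩ := Function.ne_iff.mp (hpivne j)
    rw [hs]
    exact lt_of_lt_of_le (abs_pos.mpr hk)
      (Finset.single_le_sum (f := fun k => |piv ⟨j, k⟩|) (fun i _ => abs_nonneg _)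
        (Finset.mem_univ k))
  have habs : ∀ j k, |piv ⟨j, k⟩| = piv ⟨j, k⟩ := fun j k => abs_of_nonneg (hpiv0 _)
  have hpb : ∀ j k, piv ⟨j, k⟩ = s j * pihat j k := by
    intro j k
    rw [hpihat]
    field_simp [(hs_pos j).ne']
  have hsum_pihat : ∀ j, ∑ k, |pihat j k| = 1 := by
    intro j
    have h1 : ∑ k, |pihat j k| = (∑ k, |piv ⟨j, k⟩|) / s j := by
      rw [Finset.sum_div]
      refine Finset.sum_congr rfl fun k _ => ?_
      rw [hpihat, abs_div, abs_of_pos (hs_pos j)]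
    rw [h1, ← hs]
    exact div_self (hs_pos j).ne'
  have hs_le1 : ∀ j, s j ≤ 1 := by
    intro j
    rw [hs, ← hpiv1, hsig]
    have : ∑ k, |piv ⟨j, k⟩| = ∑ k, piv ⟨j, k⟩ := Finset.sum_congr rfl fun k _ => habs j k
    rw [this]
    exact Finset.single_le_sum (f := fun j => ∑ k, piv ⟨j, k⟩)
      (fun i _ => Finset.sum_nonneg fun k _ => hpiv0 _) (Finset.mem_univ j)
  -- stationarity at block `last`
  have hstat : ∀ l, piv ⟨last, l⟩ = ∑ j, ∑ k, piv ⟨j, k⟩ * P ⟨j, k⟩ ⟨last, l⟩ := by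
    intro l
    have h := congrFun hpivP ⟨last, l⟩
    rw [Matrix.vecMul, dotProduct] at h
    rw [← h, hsig]
  have hsplit : ∀ (f : Fin m → ℝ),
      ∑ j, f j = f last + ∑ j, if j ≠ last then f j else 0 := by
    intro f
    have h1 : ∀ j, f j = (if j = last then f j else 0) + (if j ≠ last then f j else 0) := by
      intro j; by_cases h : j = last <;> simp [h]
    calc ∑ j, f j
        = ∑ j, ((if j = last then f j else 0) + (if j ≠ last then f j else 0)) :=
          Finset.sum_congr rfl fun j _ => h1 j
      _ = f last + ∑ j, if j ≠ last then f j else 0 := by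
          rw [Finset.sum_add_distrib, Finset.sum_ite_eq' Finset.univ last f]
          simp
  -- the key identity
  have key : ∀ l, ∑ k, (piv' k - piv ⟨last, k⟩) *
      ((if k = l then 1 else 0) - P ⟨last, k⟩ ⟨last, l⟩)
      = ∑ j, if j ≠ last then
          ∑ k, (s' j * pihat' j k - piv ⟨j, k⟩) * P ⟨j, k⟩ ⟨last, l⟩ else 0 := by
    intro l
    have h1 : ∑ k, (piv' k - piv ⟨last, k⟩) *
        ((if k = l then 1 else 0) - P ⟨last, k⟩ ⟨last, l⟩)
        = (piv' l - piv ⟨last, l⟩)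
          - ∑ k, (piv' k - piv ⟨last, k⟩) * P ⟨last, k⟩ ⟨last, l⟩ := by
      simp only [mul_sub, mul_ite, mul_one, mul_zero, Finset.sum_sub_distrib,
        Finset.sum_ite_eq' Finset.univ l, Finset.mem_univ, if_true]
    rw [h1]
    have h2 := hpiv' l
    have h3 : piv ⟨last, l⟩ = (∑ k, piv ⟨last, k⟩ * P ⟨last, k⟩ ⟨last, l⟩)
        + ∑ j, if j ≠ last then ∑ k, piv ⟨j, k⟩ * P ⟨j, k⟩ ⟨last, l⟩ else 0 := by
      rw [hstat l, hsplit (fun j => ∑ k, piv ⟨j, k⟩ * P ⟨j, k⟩ ⟨last, l⟩)]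
    have h4 : ∑ k, (piv' k - piv ⟨last, k⟩) * P ⟨last, k⟩ ⟨last, l⟩
        = ∑ k, piv' k * P ⟨last, k⟩ ⟨last, l⟩
          - ∑ k, piv ⟨last, k⟩ * P ⟨last, k⟩ ⟨last, l⟩ := by
      simp [sub_mul, Finset.sum_sub_distrib]
    rw [h4]
    have h5 : ∀ j : Fin m, (if j ≠ last then
          ∑ k, (s' j * pihat' j k - piv ⟨j, k⟩) * P ⟨j, k⟩ ⟨last, l⟩ else 0)
        = (if j ≠ last then s' j * ∑ k, pihat' j k * P ⟨j, k⟩ ⟨last, l⟩ else 0)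
          - (if j ≠ last then ∑ k, piv ⟨j, k⟩ * P ⟨j, k⟩ ⟨last, l⟩ else 0) := by
      intro j
      by_cases h : j ≠ last
      · simp only [if_pos h]
        rw [Finset.mul_sum, ← Finset.sum_sub_distrib]
        refine Finset.sum_congr rfl fun k _ => ?_
        ring
      · simp [h]
    calc (piv' l - piv ⟨last, l⟩)
          - (∑ k, piv' k * P ⟨last, k⟩ ⟨last, l⟩
            - ∑ k, piv ⟨last, k⟩ * P ⟨last, k⟩ ⟨last, l⟩)
        = (∑ j, if j ≠ last then s' j * ∑ k, pihat' j k * P ⟨j, k⟩ ⟨last, l⟩ else 0)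
          - ∑ j, if j ≠ last then ∑ k, piv ⟨j, k⟩ * P ⟨j, k⟩ ⟨last, l⟩ else 0 := by
          rw [h2] at *
          nth_rewrite 1 [h3]
          ring
      _ = ∑ j, if j ≠ last then
            ∑ k, (s' j * pihat' j k - piv ⟨j, k⟩) * P ⟨j, k⟩ ⟨last, l⟩ else 0 := by
          rw [← Finset.sum_sub_distrib]
          exact (Finset.sum_congr rfl fun j _ => (h5 j).symm)
  -- per-block bound
  have block : ∀ j : Fin m, j ≠ last →
      ∑ l, |∑ k, (s' j * pihat' j k - piv ⟨j, k⟩) * P ⟨j, k⟩ ⟨last, l⟩| ≤ 3 * φ * ε := by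
    intro j hj
    have hc : ∑ k, |s' j * pihat' j k - piv ⟨j, k⟩| ≤ 3 * φ := by
      have hck : ∀ k, |s' j * pihat' j k - piv ⟨j, k⟩|
          ≤ |s' j| * |pihat' j k - pihat j k| + |s' j - s j| * |pihat j k| := by
        intro k
        rw [hpb j k]
        calc |s' j * pihat' j k - s j * pihat j k|
            = |s' j * (pihat' j k - pihat j k) + (s' j - s j) * pihat j k| := by ring_nf
          _ ≤ |s' j * (pihat' j k - pihat j k)| + |(s' j - s j) * pihat j k| := abs_add_le _ _
          _ = |s' j| * |pihat' j k - pihat j k| + |s' j - s j| * |pihat j k| := by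
              rw [abs_mul, abs_mul]
      have hs'le : |s' j| ≤ 2 := by
        have := hs' j hj
        have h1 := hs_le1 j
        have h2 := (hs_pos j).le
        have : |s' j| ≤ |s' j - s j| + |s j| := by
          calc |s' j| = |(s' j - s j) + s j| := by ring_nf
            _ ≤ |s' j - s j| + |s j| := abs_add_le _ _
        rw [abs_of_nonneg h2] at this
        linarith [hs' j hj]
      calc ∑ k, |s' j * pihat' j k - piv ⟨j, k⟩|
          ≤ ∑ k, (|s' j| * |pihat' j k - pihat j k| + |s' j - s j| * |pihat j k|) :=
            Finset.sum_le_sum fun k _ => hck k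
        _ = |s' j| * ∑ k, |pihat' j k - pihat j k| + |s' j - s j| * ∑ k, |pihat j k| := by
            rw [Finset.sum_add_distrib, Finset.mul_sum, Finset.mul_sum]
        _ ≤ 2 * φ + φ * 1 := by
            have h1 := hpihat' j hj
            have h2 := hs' j hj
            have h3 := hsum_pihat j
            have h4 : 0 ≤ ∑ k, |pihat' j k - pihat j k| :=
              Finset.sum_nonneg fun k _ => abs_nonneg _
            have h5 : (0:ℝ) ≤ |s' j| := abs_nonneg _
            nlinarith [abs_nonneg (s' j - s j)]
        _ = 3 * φ := by ring
    calc ∑ l, |∑ k, (s' j * pihat' j k - piv ⟨j, k⟩) * P ⟨j, k⟩ ⟨last, l⟩|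
        ≤ ∑ l, ∑ k, |s' j * pihat' j k - piv ⟨j, k⟩| * P ⟨j, k⟩ ⟨last, l⟩ := by
          refine Finset.sum_le_sum fun l _ => ?_
          calc |∑ k, (s' j * pihat' j k - piv ⟨j, k⟩) * P ⟨j, k⟩ ⟨last, l⟩|
              ≤ ∑ k, |(s' j * pihat' j k - piv ⟨j, k⟩) * P ⟨j, k⟩ ⟨last, l⟩| :=
                Finset.abs_sum_le_sum_abs _ _
            _ = ∑ k, |s' j * pihat' j k - piv ⟨j, k⟩| * P ⟨j, k⟩ ⟨last, l⟩ := by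
                refine Finset.sum_congr rfl fun k _ => ?_
                rw [abs_mul, abs_of_nonneg (hP0 _ _)]
      _ = ∑ k, |s' j * pihat' j k - piv ⟨j, k⟩| * ∑ l, P ⟨j, k⟩ ⟨last, l⟩ := by
          rw [Finset.sum_comm]
          exact Finset.sum_congr rfl fun k _ => by rw [Finset.mul_sum]
      _ ≤ ∑ k, |s' j * pihat' j k - piv ⟨j, k⟩| * ε :=
          Finset.sum_le_sum fun k _ =>
            mul_le_mul_of_nonneg_left (hrow j hj k) (abs_nonneg _)
      _ = (∑ k, |s' j * pihat' j k - piv ⟨j, k⟩|) * ε := by rw [← Finset.sum_mul]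
      _ ≤ 3 * φ * ε := mul_le_mul_of_nonneg_right hc hε
  -- put everything together
  calc ∑ l, |∑ k, (piv' k - piv ⟨last, k⟩) *
        ((if k = l then 1 else 0) - P ⟨last, k⟩ ⟨last, l⟩)|
      = ∑ l, |∑ j, if j ≠ last then
          ∑ k, (s' j * pihat' j k - piv ⟨j, k⟩) * P ⟨j, k⟩ ⟨last, l⟩ else 0| := by
        exact Finset.sum_congr rfl fun l _ => by rw [key l]
    _ ≤ ∑ l, ∑ j, |if j ≠ last then
          ∑ k, (s' j * pihat' j k - piv ⟨j, k⟩) * P ⟨j, k⟩ ⟨last, l⟩ else 0| :=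
        Finset.sum_le_sum fun l _ => Finset.abs_sum_le_sum_abs _ _
    _ = ∑ j, ∑ l, |if j ≠ last then
          ∑ k, (s' j * pihat' j k - piv ⟨j, k⟩) * P ⟨j, k⟩ ⟨last, l⟩ else 0| :=
        Finset.sum_comm
    _ ≤ ∑ j : Fin m, if j ≠ last then 3 * φ * ε else 0 := by
        refine Finset.sum_le_sum fun j _ => ?_
        by_cases h : j ≠ last
        · simp only [if_pos h]
          exact block j h
        · simp [h]
    _ = ((m : ℝ) - 1) * (3 * φ * ε) := by
        have h1 : ∀ j : Fin m, (if j ≠ last then (3*φ*ε) else 0)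
            = 3*φ*ε - (if j = last then (3*φ*ε) else 0) := by
          intro j; by_cases h : j = last <;> simp [h]
        calc ∑ j : Fin m, (if j ≠ last then 3*φ*ε else 0)
            = ∑ j : Fin m, (3*φ*ε - (if j = last then (3*φ*ε) else 0)) :=
              Finset.sum_congr rfl fun j _ => h1 j
          _ = (m : ℝ) * (3*φ*ε) - 3*φ*ε := by
              rw [Finset.sum_sub_distrib, Finset.sum_const,
                Finset.sum_ite_eq' Finset.univ last (fun _ => 3*φ*ε)]
              simp only [Finset.mem_univ, if_true, Finset.card_univ, Fintype.card_fin,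
                nsmul_eq_mul]
          _ = ((m : ℝ) - 1) * (3*φ*ε) := by ring
    _ = 3 * ((m : ℝ) - 1) * φ * ε := by ring
end

section
/- Let F : ℝ^n → ℝ^n, let π ∈ ℝ^n, and let q ∈ [0,1) and c, φ ≥ 0 be such that ‖F(x) − π‖ ≤ q·‖x − π‖ for all x ∈ ℝ^n. Let (x_t)_{t ≥ 0} be a sequence in ℝ^n with ‖x₀ − π‖ ≤ φ and ‖x_t − F(x_{t−1})‖ ≤ c·q^t for every t ≥ 1. Then ‖x_t − π‖ ≤ q^t·(φ + t·c) for every t ≥ 0; in particular, x_t converges to π as t → ∞. -/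
/-!
Write `e t = dist (x t) π`. The triangle inequality through `F (x t)` gives
`e (t + 1) ≤ q e t + c q^(t + 1)`, and dividing by `q^(t + 1)` shows that `e t / q^t`
grows by at most `c` per step, whence `e t ≤ q^t (φ + t c)`. The right-hand side tends to `0`
because `t q^t → 0` for `0 ≤ q < 1`.
-/

open BigOperators Filter

open Topology

theorem le_pow_mul_of_le_mul_add_mul_pow {e : ℕ → ℝ} {q c φ : ℝ} (hq : 0 ≤ q)
    (h0 : e 0 ≤ φ) (hstep : ∀ t, e (t + 1) ≤ q * e t + c * q ^ (t + 1)) (t : ℕ) :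
    e t ≤ q ^ t * (φ + t * c) := by
  induction t with
  | zero => simpa using h0
  | succ t ih =>
    calc e (t + 1) ≤ q * (q ^ t * (φ + t * c)) + c * q ^ (t + 1) :=
          (hstep t).trans (by gcongr)
      _ = q ^ (t + 1) * (φ + ↑(t + 1) * c) := by push_cast; ring

theorem tendsto_pow_mul_add_natCast_mul_atTop_nhds_zero {q : ℝ} (hq0 : 0 ≤ q) (hq1 : q < 1)
    (φ c : ℝ) : Tendsto (fun t : ℕ => q ^ t * (φ + t * c)) atTop (𝓝 0) := by
  have h := ((tendsto_pow_atTop_nhds_zero_of_lt_one hq0 hq1).const_mul φ).add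
    ((tendsto_self_mul_const_pow_of_lt_one hq0 hq1).const_mul c)
  rw [mul_zero, mul_zero, add_zero] at h
  exact h.congr fun t => by ring

section InexactIteration

variable {α : Type*} [PseudoMetricSpace α] {F : α → α} {p : α} {q c φ : ℝ} {x : ℕ → α}

theorem dist_le_pow_mul_of_inexact_iteration (hq : 0 ≤ q)
    (hF : ∀ y, dist (F y) p ≤ q * dist y p) (hx0 : dist (x 0) p ≤ φ)
    (hxt : ∀ t, dist (x (t + 1)) (F (x t)) ≤ c * q ^ (t + 1)) (t : ℕ) :
    dist (x t) p ≤ q ^ t * (φ + t * c) := by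
  refine le_pow_mul_of_le_mul_add_mul_pow (e := fun t => dist (x t) p) hq hx0 (fun t => ?_) t
  calc dist (x (t + 1)) p ≤ dist (x (t + 1)) (F (x t)) + dist (F (x t)) p := dist_triangle _ _ _
    _ ≤ c * q ^ (t + 1) + q * dist (x t) p := add_le_add (hxt t) (hF (x t))
    _ = q * dist (x t) p + c * q ^ (t + 1) := add_comm _ _

theorem tendsto_of_inexact_iteration (hq0 : 0 ≤ q) (hq1 : q < 1)
    (hF : ∀ y, dist (F y) p ≤ q * dist y p) (hx0 : dist (x 0) p ≤ φ)
    (hxt : ∀ t, dist (x (t + 1)) (F (x t)) ≤ c * q ^ (t + 1)) :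
    Tendsto x atTop (𝓝 p) :=
  tendsto_iff_dist_tendsto_zero.2 <|
    squeeze_zero (fun _ => dist_nonneg) (dist_le_pow_mul_of_inexact_iteration hq0 hF hx0 hxt)
      (tendsto_pow_mul_add_natCast_mul_atTop_nhds_zero hq0 hq1 φ c)

end InexactIteration

theorem euclNorm_sub_eq_dist {ι : Type*} [Fintype ι] (v w : ι → ℝ) :
    euclNorm (v - w) = dist (WithLp.toLp 2 v : EuclideanSpace ℝ ι) (WithLp.toLp 2 w) := by
  simp only [EuclideanSpace.dist_eq, Real.dist_eq, sq_abs, euclNorm, Pi.sub_apply]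

theorem stmt_17_general {n : ℕ} (F : (Fin n → ℝ) → (Fin n → ℝ)) (piv : Fin n → ℝ)
    (q c φ : ℝ) (hq0 : 0 ≤ q) (hq1 : q < 1)
    (hF : ∀ x, euclNorm (F x - piv) ≤ q * euclNorm (x - piv))
    (x : ℕ → Fin n → ℝ)
    (hx0 : euclNorm (x 0 - piv) ≤ φ)
    (hxt : ∀ t : ℕ, 1 ≤ t → euclNorm (x t - F (x (t - 1))) ≤ c * q ^ t) :
    (∀ t : ℕ, euclNorm (x t - piv) ≤ q ^ t * (φ + t * c)) ∧
      Tendsto x atTop (nhds piv) := by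
  let toE : (Fin n → ℝ) → EuclideanSpace ℝ (Fin n) := WithLp.toLp 2
  have hF' : ∀ y, dist (toE (F y.ofLp)) (toE piv) ≤ q * dist y (toE piv) := fun y => by
    simpa only [euclNorm_sub_eq_dist] using hF y.ofLp
  have hx0' : dist (toE (x 0)) (toE piv) ≤ φ := by rwa [← euclNorm_sub_eq_dist]
  have hxt' : ∀ t, dist (toE (x (t + 1))) (toE (F (x t))) ≤ c * q ^ (t + 1) := fun t => by
    simpa only [euclNorm_sub_eq_dist, Nat.add_sub_cancel] using hxt (t + 1) (Nat.le_add_left 1 t)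
  refine ⟨fun t => ?_, ?_⟩
  · rw [euclNorm_sub_eq_dist]
    exact dist_le_pow_mul_of_inexact_iteration (x := toE ∘ x) hq0 hF' hx0' hxt' t
  · exact (PiLp.continuous_ofLp 2 _).tendsto _ |>.comp
      (tendsto_of_inexact_iteration (x := toE ∘ x) hq0 hq1 hF' hx0' hxt')

/-- If `‖F(x) - π‖ ≤ q‖x - π‖` for all `x` with `q ∈ [0,1)`, `c, φ ≥ 0`,
`‖x₀ - π‖ ≤ φ` and `‖x_t - F(x_{t-1})‖ ≤ c·q^t` for `t ≥ 1`, then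
`‖x_t - π‖ ≤ q^t(φ + t·c)` for all `t`; in particular `x_t → π`. -/
theorem stmt_17 {n : ℕ} (F : (Fin n → ℝ) → (Fin n → ℝ)) (piv : Fin n → ℝ)
    (q c φ : ℝ) (hq0 : 0 ≤ q) (hq1 : q < 1) (hc : 0 ≤ c) (hφ : 0 ≤ φ)
    (hF : ∀ x, euclNorm (F x - piv) ≤ q * euclNorm (x - piv))
    (x : ℕ → Fin n → ℝ)
    (hx0 : euclNorm (x 0 - piv) ≤ φ)
    (hxt : ∀ t : ℕ, 1 ≤ t → euclNorm (x t - F (x (t - 1))) ≤ c * q ^ t) :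
    (∀ t : ℕ, euclNorm (x t - piv) ≤ q ^ t * (φ + t * c)) ∧
      Tendsto x atTop (nhds piv) :=
  stmt_17_general F piv q c φ hq0 hq1 hF x hx0 hxt
end

section
/- Let k ≥ 2, let A be a real k×k matrix, and suppose there is an invertible real k×k matrix W with W A = fromBlocks(λ, 0; 0, T) · W for some λ ∈ ℝ and some real (k−1)×(k−1) matrix T such that I − T is invertible and ‖(I−T)^{-1}‖ ≤ w for a real number w > 0. Then every root μ ∈ ℂ of the characteristic polynomial of A with μ ≠ λ satisfies |1 − μ| ≥ 1/w. -/
/-!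
Because `W A W⁻¹ = fromBlocks(λ, 0; 0, T)`, the characteristic polynomial of `A` is
`(X - λ) · χ_T`, so a root `μ ≠ λ` is a complex eigenvalue of `T` and `1 - μ` one of `I - T`.
An eigenvector `v` then satisfies `v = (1 - μ) (I - T)⁻¹ v`, hence
`‖v‖ ≤ |1 - μ| ‖(I - T)⁻¹‖ ‖v‖ ≤ |1 - μ| w ‖v‖`. The spectral norm of a real matrix also bounds
its action on complex vectors, since it acts on real and imaginary parts separately.
-/

open Matrix Polynomial

lemma EuclideanSpace.sq_norm_toLp_eq_re_add_im {ι : Type*} [Fintype ι] (u : ι → ℂ) :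
    ‖(WithLp.toLp 2 u : EuclideanSpace ℂ ι)‖ ^ 2 =
      ‖(WithLp.toLp 2 fun i ↦ (u i).re : EuclideanSpace ℝ ι)‖ ^ 2
        + ‖(WithLp.toLp 2 fun i ↦ (u i).im : EuclideanSpace ℝ ι)‖ ^ 2 := by
  simp only [EuclideanSpace.norm_sq_eq, ← Finset.sum_add_distrib]
  refine Finset.sum_congr rfl fun i _ ↦ ?_
  simp only [Real.norm_eq_abs, sq_abs, Complex.sq_norm, Complex.normSq_apply]
  ring

section SpecNorm

variable {m n : Type*} [Fintype m] [Fintype n] [DecidableEq n]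

lemma norm_toLp_mulVec_le_specNorm (C : Matrix m n ℝ) (x : n → ℝ) :
    ‖(WithLp.toLp 2 (C *ᵥ x) : EuclideanSpace ℝ m)‖ ≤
      specNorm C * ‖(WithLp.toLp 2 x : EuclideanSpace ℝ n)‖ :=
  (LinearMap.toContinuousLinearMap (toEuclideanLin C)).le_opNorm (WithLp.toLp 2 x)

lemma norm_toLp_map_algebraMap_mulVec_le_specNorm (C : Matrix m n ℝ) (v : n → ℂ) :
    ‖(WithLp.toLp 2 (C.map (algebraMap ℝ ℂ) *ᵥ v) : EuclideanSpace ℂ m)‖ ≤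
      specNorm C * ‖(WithLp.toLp 2 v : EuclideanSpace ℂ n)‖ := by
  have hre : (fun j ↦ (C.map (algebraMap ℝ ℂ) *ᵥ v) j |>.re) = C *ᵥ fun i ↦ (v i).re := by
    ext j; simp [mulVec, dotProduct, Complex.re_sum]
  have him : (fun j ↦ (C.map (algebraMap ℝ ℂ) *ᵥ v) j |>.im) = C *ᵥ fun i ↦ (v i).im := by
    ext j; simp [mulVec, dotProduct, Complex.im_sum]
  have hC : 0 ≤ specNorm C := norm_nonneg _
  refine le_of_sq_le_sq ?_ (by positivity)
  rw [mul_pow, EuclideanSpace.sq_norm_toLp_eq_re_add_im, EuclideanSpace.sq_norm_toLp_eq_re_add_im,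
    hre, him, mul_add]
  gcongr <;> simpa only [mul_pow] using
    pow_le_pow_left₀ (norm_nonneg _) (norm_toLp_mulVec_le_specNorm C _) 2

end SpecNorm

lemma Matrix.exists_mulVec_eq_smul_of_isRoot_charpoly {n K : Type*} [Fintype n] [DecidableEq n]
    [Field K] {M : Matrix n n K} {μ : K} (hμ : M.charpoly.IsRoot μ) :
    ∃ v ≠ 0, M *ᵥ v = μ • v := by
  rw [IsRoot, eval_charpoly, ← exists_mulVec_eq_zero_iff] at hμ
  obtain ⟨v, hv, hMv⟩ := hμ
  refine ⟨v, hv, ?_⟩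
  rw [sub_mulVec, scalar_apply, sub_eq_zero] at hMv
  rw [← hMv]
  ext i
  simp [mulVec_diagonal]

lemma Matrix.charpoly_eq_of_mul_eq_mul {n R : Type*} [Fintype n] [DecidableEq n] [CommRing R]
    {A B W : Matrix n n R} (hW : IsUnit W) (h : W * A = B * W) : A.charpoly = B.charpoly := by
  obtain ⟨U, rfl⟩ := hW
  rw [← charpoly_units_conj' U B, mul_assoc, ← h, ← mul_assoc]
  simp

lemma Matrix.charpoly_of_const_unique {n R : Type*} [Fintype n] [DecidableEq n] [Unique n]
    [CommRing R] (a : R) : (of fun _ _ : n ↦ a).charpoly = X - C a := by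
  have hdiag : (of fun _ _ : n ↦ a) = diagonal fun _ ↦ a := by
    ext i j
    simp [Subsingleton.elim i j]
  rw [hdiag, charpoly_diagonal, Fintype.prod_unique]

lemma one_le_norm_eigenvalue_mul_specNorm_inv {n : Type*} [Fintype n] [DecidableEq n]
    {B : Matrix n n ℝ} (hB : IsUnit B) {ν : ℂ} {v : n → ℂ} (hv : v ≠ 0)
    (hBv : B.map (algebraMap ℝ ℂ) *ᵥ v = ν • v) : 1 ≤ ‖ν‖ * specNorm B⁻¹ := by
  have hv_eq : v = ν • (B⁻¹.map (algebraMap ℝ ℂ) *ᵥ v) := by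
    rw [← mulVec_smul, ← hBv, mulVec_mulVec, ← Matrix.map_mul,
      nonsing_inv_mul _ ((isUnit_iff_isUnit_det B).mp hB),
      Matrix.map_one _ (map_zero _) (map_one _), one_mulVec]
  have hv_pos : 0 < ‖(WithLp.toLp 2 v : EuclideanSpace ℂ n)‖ := by
    simpa using hv
  refine le_of_mul_le_mul_right ?_ hv_pos
  calc 1 * ‖(WithLp.toLp 2 v : EuclideanSpace ℂ n)‖
      = ‖ν‖ * ‖(WithLp.toLp 2 (B⁻¹.map (algebraMap ℝ ℂ) *ᵥ v) : EuclideanSpace ℂ n)‖ := by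
        rw [one_mul, ← norm_smul, ← WithLp.toLp_smul, ← hv_eq]
    _ ≤ ‖ν‖ * (specNorm B⁻¹ * ‖(WithLp.toLp 2 v : EuclideanSpace ℂ n)‖) :=
        mul_le_mul_of_nonneg_left (norm_toLp_map_algebraMap_mulVec_le_specNorm _ _) (norm_nonneg _)
    _ = ‖ν‖ * specNorm B⁻¹ * ‖(WithLp.toLp 2 v : EuclideanSpace ℂ n)‖ := (mul_assoc ..).symm

theorem stmt_18_general {k : ℕ}
    (A W : Matrix (Fin 1 ⊕ Fin (k - 1)) (Fin 1 ⊕ Fin (k - 1)) ℝ)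
    (hW : IsUnit W)
    (lam : ℝ) (T : Matrix (Fin (k - 1)) (Fin (k - 1)) ℝ)
    (hWA : W * A = Matrix.fromBlocks (Matrix.of fun _ _ => lam) 0 0 T * W)
    (hT : IsUnit (1 - T))
    (w : ℝ) (hTw : specNorm (1 - T)⁻¹ ≤ w) :
    ∀ μ : ℂ, (A.charpoly.map (algebraMap ℝ ℂ)).IsRoot μ → μ ≠ (lam : ℂ) →
      1 / w ≤ ‖1 - μ‖ := by
  intro μ hroot hne
  have hcharpoly : A.charpoly = (X - C lam) * T.charpoly := by
    rw [charpoly_eq_of_mul_eq_mul hW hWA, charpoly_fromBlocks_zero₁₂, charpoly_of_const_unique]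
  have hTμ : (T.map (algebraMap ℝ ℂ)).charpoly.IsRoot μ := by
    rw [charpoly_map, IsRoot.def]
    rw [hcharpoly, Polynomial.map_mul, IsRoot.def, eval_mul] at hroot
    refine (mul_eq_zero.mp hroot).resolve_left ?_
    simpa [sub_eq_zero] using hne
  obtain ⟨v, hv, hTv⟩ := exists_mulVec_eq_smul_of_isRoot_charpoly hTμ
  have h1Tv : (1 - T).map (algebraMap ℝ ℂ) *ᵥ v = (1 - μ) • v := by
    rw [Matrix.map_sub _ (map_sub _), Matrix.map_one _ (map_zero _) (map_one _), sub_mulVec,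
      one_mulVec, hTv, sub_smul, one_smul]
  have hbound : 1 ≤ ‖1 - μ‖ * w :=
    (one_le_norm_eigenvalue_mul_specNorm_inv hT hv h1Tv).trans (by gcongr)
  have hw : 0 < w := pos_of_mul_pos_right (by linarith) (norm_nonneg _)
  rwa [div_le_iff₀ hw]

/-- If `W A = fromBlocks(λ,0;0,T) W` with `W` invertible, `I - T` invertible
and `‖(I-T)⁻¹‖ ≤ w` for some `w > 0`, then every root `μ ∈ ℂ` of the characteristic
polynomial of `A` with `μ ≠ λ` satisfies `|1 - μ| ≥ 1/w`. -/
theorem stmt_18 {k : ℕ} (hk : 2 ≤ k)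
    (A W : Matrix (Fin 1 ⊕ Fin (k - 1)) (Fin 1 ⊕ Fin (k - 1)) ℝ)
    (hW : IsUnit W)
    (lam : ℝ) (T : Matrix (Fin (k - 1)) (Fin (k - 1)) ℝ)
    (hWA : W * A = Matrix.fromBlocks (Matrix.of fun _ _ => lam) 0 0 T * W)
    (hT : IsUnit (1 - T))
    (w : ℝ) (hw : 0 < w) (hTw : specNorm (1 - T)⁻¹ ≤ w) :
    ∀ μ : ℂ, (A.charpoly.map (algebraMap ℝ ℂ)).IsRoot μ → μ ≠ (lam : ℂ) →
      1 / w ≤ ‖1 - μ‖ :=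
  stmt_18_general A W hW lam T hWA hT w hTw
end
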